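/- There exists a continuous linear automorphism T : ℓ∞/c₀ → ℓ∞/c₀ (a bijective bounded linear operator with bounded inverse) which is liftable, i.e., there exists a bounded linear operator R : ℓ∞ → ℓ∞ with Q ∘ R = T ∘ Q, but such that no lifting of T is given by a c₀-matrix: every bounded linear operator R : ℓ∞ → ℓ∞ with Q ∘ R = T ∘ Q fails to be given by a c₀-matrix. -/

import Mathlib

open Filter Topology

noncomputable section

/-- The Banach space `ℓ∞` of bounded real sequences with the sup norm. -/
abbrev ellInfty : Type := BoundedContinuousFunction ℕ ℝ

/-- `c₀`, the subspace of `ℓ∞` of sequences converging to `0`. -/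
def czero : Submodule ℝ ellInfty where
  carrier := {f | Tendsto (⇑f) atTop (𝓝 (0 : ℝ))}
  add_mem' := by
    intro a b ha hb
    have h := ha.add hb
    rw [add_zero] at h
    show Tendsto _ _ _
    exact h
  zero_mem' := by
    show Tendsto _ _ _
    simp only [BoundedContinuousFunction.coe_zero]
    exact tendsto_const_nhds
  smul_mem' := by intro c f hf; simpa using hf.const_mul c

/-- The quotient Banach space `ℓ∞/c₀`; `czero.mkQ : ℓ∞ → ℓ∞/c₀` is the quotient map. -/
abbrev ellInftyModCzero : Type := ellInfty ⧸ czero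

/-- A bounded operator `T` on `ℓ∞/c₀` is *locally null* if for every infinite `A ⊆ ℕ`
there is an infinite `A₁ ⊆ A` such that `T (Q f) = 0` for every `f ∈ ℓ∞` vanishing
outside of `A₁`. -/
def LocallyNull (T : ellInftyModCzero →L[ℝ] ellInftyModCzero) : Prop :=
  ∀ A : Set ℕ, A.Infinite → ∃ A₁ ⊆ A, A₁.Infinite ∧
    ∀ f : ellInfty, (∀ n ∉ A₁, f n = 0) → T (czero.mkQ f) = 0

/-- `R : ℓ∞ → ℓ∞` is given by the `c₀`-matrix `b`: the rows of `b` are absolutely summable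
with uniformly bounded `ℓ₁`-norms, the columns of `b` converge to `0`, and `R` acts by
matrix multiplication by `b`. -/
structure IsC0Matrix (R : ellInfty →L[ℝ] ellInfty) (b : ℕ → ℕ → ℝ) : Prop where
  rows_summable : ∀ i, Summable fun j => |b i j|
  rows_bounded : ∃ C : ℝ, ∀ i, (∑' j, |b i j|) ≤ C
  cols_vanish : ∀ j, Tendsto (fun i => b i j) atTop (𝓝 (0 : ℝ))
  matrix_repr : ∀ f : ellInfty, ∀ i, R f i = ∑' j, b i j * f j

/-!
Let `φ` be the limit along a nonprincipal ultrafilter `u` containing the odd numbers and `e` the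
indicator of the even numbers. As `φ` kills `c₀` and `φ e = 0`, the transvection
`x ↦ x + φ x • Q e` is an automorphism of `ℓ∞/c₀`, lifted by `f ↦ f + φ f • e`.

If some lift `R` had a `c₀`-matrix, a gliding hump would give blocks `[m k, m (k + 1))` and even
rows `idx k` inside them whose mass off their block is `< 1/2`. Either the union of the
even-numbered blocks or its complement lies in `u`; its indicator `f` has `φ f = 1` and vanishes
on infinitely many blocks, and at the corresponding rows `R f ≈ f + e = 1` while `|R f| < 1/2`.
-/

open Set Function

section Transvection

variable {R M : Type*} [Ring R] [TopologicalSpace R] [AddCommGroup M] [Module R M]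
  [TopologicalSpace M] [ContinuousAdd M] [ContinuousSMul R M]

def ContinuousLinearEquiv.transvection {f : M →L[R] R} {v : M} (h : f v = 0) : M ≃L[R] M where
  toLinearEquiv := LinearEquiv.transvection (f := (f : M →ₗ[R] R)) h
  continuous_toFun := continuous_id.add (f.continuous.smul continuous_const)
  continuous_invFun := continuous_id.add (f.continuous.smul continuous_const)

theorem ContinuousLinearEquiv.transvection_apply {f : M →L[R] R} {v : M} (h : f v = 0) (x : M) :
    ContinuousLinearEquiv.transvection h x = x + f x • v :=
  rfl

end Transvection

namespace BoundedContinuousFunction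

variable {α : Type*} [TopologicalSpace α] (u : Ultrafilter α)

theorem exists_tendsto_ultrafilter (f : α →ᵇ ℝ) : ∃ x, Tendsto f u (𝓝 x) := by
  obtain ⟨x, -, hx⟩ := (isCompact_closedBall (0 : ℝ) ‖f‖).ultrafilter_le_nhds (u.map f) <| by
    rw [Ultrafilter.coe_map, le_principal_iff]
    exact mem_map.2 (univ_mem' fun a => by simpa using f.norm_coe_le_norm a)
  exact ⟨x, hx⟩

theorem tendsto_limUnder_ultrafilter (f : α →ᵇ ℝ) : Tendsto f u (𝓝 (limUnder (u : Filter α) f)) :=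
  tendsto_nhds_limUnder (exists_tendsto_ultrafilter u f)

def ultrafilterLim : (α →ᵇ ℝ) →L[ℝ] ℝ :=
  LinearMap.mkContinuous
    { toFun := fun f => limUnder (u : Filter α) f
      map_add' := fun f g =>
        ((tendsto_limUnder_ultrafilter u f).add (tendsto_limUnder_ultrafilter u g)).limUnder_eq
      map_smul' := fun c f => ((tendsto_limUnder_ultrafilter u f).const_smul c).limUnder_eq }
    1 fun f => by
      rw [one_mul]
      exact le_of_tendsto (tendsto_limUnder_ultrafilter u f).norm
        (Eventually.of_forall f.norm_coe_le_norm)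

theorem tendsto_ultrafilterLim (f : α →ᵇ ℝ) : Tendsto f u (𝓝 (ultrafilterLim u f)) :=
  tendsto_limUnder_ultrafilter u f

variable {u}

theorem ultrafilterLim_eq {f : α →ᵇ ℝ} {x : ℝ} (h : Tendsto f u (𝓝 x)) :
    ultrafilterLim u f = x :=
  tendsto_nhds_unique (tendsto_ultrafilterLim u f) h

theorem ultrafilterLim_indicator_of_mem {s : Set α} (hs : IsClopen s) (hsu : s ∈ u) :
    ultrafilterLim u (indicator s hs) = 1 :=
  ultrafilterLim_eq <| tendsto_const_nhds.congr' <| eventually_of_mem hsu fun _ hx => by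
    simp [Set.indicator_of_mem hx]

theorem ultrafilterLim_indicator_of_notMem {s : Set α} (hs : IsClopen s) (hsu : s ∉ u) :
    ultrafilterLim u (indicator s hs) = 0 :=
  ultrafilterLim_eq <| tendsto_const_nhds.congr' <|
    eventually_of_mem (u.compl_mem_iff_notMem.2 hsu) fun _ hx => by
      simp [Set.indicator_of_notMem hx]

end BoundedContinuousFunction

theorem Ultrafilter.exists_mem_frequently_disjoint {α : Type*} (u : Ultrafilter α)
    {B : ℕ → Set α} (hB : Pairwise (Disjoint on B)) :
    ∃ s ∈ u, ∃ᶠ k in atTop, Disjoint s (B k) := by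
  set S := ⋃ (k) (_ : Even k), B k
  rcases u.mem_or_compl_mem S with hS | hS
  · refine ⟨S, hS, Nat.frequently_odd.mono fun k hk => ?_⟩
    simp only [S, disjoint_iUnion_left]
    exact fun j hj => hB fun hjk => (Nat.not_even_iff_odd.2 hk) (hjk ▸ hj)
  · exact ⟨Sᶜ, hS, Nat.frequently_even.mono fun k hk =>
      disjoint_compl_left_iff_subset.2 (subset_biUnion_of_mem (u := B) hk)⟩

theorem abs_tsum_mul_le_of_eq_zero_on_Ico {a f : ℕ → ℝ} {M N : ℕ} (ha : Summable fun j => |a j|)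
    (hf : ∀ j, |f j| ≤ 1) (hMN : M ≤ N) (hf0 : ∀ j ∈ Ico M N, f j = 0) :
    |∑' j, a j * f j| ≤ ∑ j ∈ Finset.range M, |a j| + ∑' j, |a (j + N)| := by
  have habs : ∀ j, |a j * f j| ≤ |a j| := fun j => by
    simpa [abs_mul] using mul_le_mul_of_nonneg_left (hf j) (abs_nonneg (a j))
  have hs : Summable fun j => |a j * f j| := ha.of_nonneg_of_le (fun _ => abs_nonneg _) habs
  have hhead : ∑ j ∈ Finset.range N, |a j * f j| ≤ ∑ j ∈ Finset.range M, |a j| := by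
    rw [← Finset.sum_range_add_sum_Ico _ hMN,
      Finset.sum_eq_zero (s := Finset.Ico M N) fun j hj => by
        rw [hf0 j (Finset.mem_Ico.1 hj), mul_zero, abs_zero],
      add_zero]
    exact Finset.sum_le_sum fun j _ => habs j
  have htail : ∑' j, |a (j + N) * f (j + N)| ≤ ∑' j, |a (j + N)| :=
    Summable.tsum_le_tsum (fun j => habs _) ((summable_nat_add_iff N).2 hs)
      ((summable_nat_add_iff N).2 ha)
  calc |∑' j, a j * f j| ≤ ∑' j, |a j * f j| := by
        simpa only [Real.norm_eq_abs] using norm_tsum_le_tsum_norm (f := fun j => a j * f j) hs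
    _ = ∑ j ∈ Finset.range N, |a j * f j| + ∑' j, |a (j + N) * f (j + N)| :=
        (hs.sum_add_tsum_nat_add N).symm
    _ ≤ _ := add_le_add hhead htail

theorem exists_gliding_hump {b : ℕ → ℕ → ℝ}
    (hcol : ∀ j, Tendsto (fun i => b i j) atTop (𝓝 0)) {p : ℕ → Prop}
    (hp : ∃ᶠ i in atTop, p i) {ε : ℝ} (hε : 0 < ε) :
    ∃ m idx : ℕ → ℕ, StrictMono m ∧ ∀ k, idx k ∈ Ico (m k) (m (k + 1)) ∧ p (idx k) ∧
      ∑ j ∈ Finset.range (m k), |b (idx k) j| + ∑' j, |b (idx k) (j + m (k + 1))| < ε := by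
  have hrow_small : ∀ M, ∃ i, M ≤ i ∧ p i ∧ ∑ j ∈ Finset.range M, |b i j| < ε / 2 := by
    intro M
    have hhead : Tendsto (fun i => ∑ j ∈ Finset.range M, |b i j|) atTop (𝓝 0) := by
      simpa using tendsto_finsetSum (Finset.range M) fun j _ => (hcol j).abs
    obtain ⟨i, hpi, hi, hMi⟩ := (hp.and_eventually
      ((hhead.eventually (gt_mem_nhds (half_pos hε))).and (eventually_ge_atTop M))).exists
    exact ⟨i, hMi, hpi, hi⟩
  have hcut : ∀ i, ∃ N, i < N ∧ ∑' j, |b i (j + N)| < ε / 2 := fun i =>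
    (((tendsto_sum_nat_add fun j => |b i j|).eventually (gt_mem_nhds (half_pos hε))).and
      (eventually_gt_atTop i)).exists.imp fun _ h => h.symm
  choose row hrow_ge hrow_p hrow_head using hrow_small
  choose cut hcut_gt hcut_tail using hcut
  obtain ⟨m, hm⟩ : ∃ m : ℕ → ℕ, ∀ k, m (k + 1) = cut (row (m k)) :=
    ⟨fun k => Nat.rec 0 (fun _ M => cut (row M)) k, fun _ => rfl⟩
  have hblock : ∀ k, row (m k) ∈ Ico (m k) (m (k + 1)) := fun k =>
    ⟨hrow_ge _, hm k ▸ hcut_gt _⟩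
  refine ⟨m, fun k => row (m k), strictMono_nat_of_lt_succ fun k =>
    (hblock k).1.trans_lt (hblock k).2, fun k => ⟨hblock k, hrow_p _, ?_⟩⟩
  rw [hm k]
  linarith [hrow_head (m k), hcut_tail (row (m k))]

theorem IsC0Matrix.exists_blocks {R : ellInfty →L[ℝ] ellInfty} {b : ℕ → ℕ → ℝ}
    (hb : IsC0Matrix R b) {p : ℕ → Prop} (hp : ∃ᶠ i in atTop, p i) {ε : ℝ} (hε : 0 < ε) :
    ∃ m idx : ℕ → ℕ, StrictMono m ∧ ∀ k, idx k ∈ Ico (m k) (m (k + 1)) ∧ p (idx k) ∧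
      ∀ f : ellInfty, (∀ j, |f j| ≤ 1) → (∀ j ∈ Ico (m k) (m (k + 1)), f j = 0) →
        |R f (idx k)| < ε := by
  obtain ⟨m, idx, hm, hidx⟩ := exists_gliding_hump hb.cols_vanish hp hε
  refine ⟨m, idx, hm, fun k => ⟨(hidx k).1, (hidx k).2.1, fun f hf hf0 => ?_⟩⟩
  rw [hb.matrix_repr]
  exact (abs_tsum_mul_le_of_eq_zero_on_Ico (hb.rows_summable _) hf (hm.monotone k.le_succ)
    hf0).trans_lt (hidx k).2.2

open BoundedContinuousFunction

theorem czero_le_ker_ultrafilterLim {u : Ultrafilter ℕ} (hu : (u : Filter ℕ) ≤ atTop) :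
    czero ≤ (ultrafilterLim u).ker := fun _ hf => ultrafilterLim_eq (hf.mono_left hu)

def oddUltrafilter : Ultrafilter ℕ := Ultrafilter.of (atTop.map (2 * · + 1))

theorem oddUltrafilter_le_atTop : (oddUltrafilter : Filter ℕ) ≤ atTop :=
  (Ultrafilter.of_le _).trans (tendsto_atTop_mono (fun n => show n ≤ 2 * n + 1 by omega) tendsto_id)

theorem even_notMem_oddUltrafilter : {n | Even n} ∉ oddUltrafilter :=
  oddUltrafilter.compl_mem_iff_notMem.1 <| Ultrafilter.of_le _ <|
    mem_map.2 <| univ_mem' fun n => by simp [parity_simps]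

def evenIndicator : ellInfty := indicator {n | Even n} (isClopen_discrete _)

abbrev oddLimit : ellInfty →L[ℝ] ℝ := ultrafilterLim oddUltrafilter

def oddLimitQuot : ellInftyModCzero →L[ℝ] ℝ :=
  czero.liftQL oddLimit (czero_le_ker_ultrafilterLim oddUltrafilter_le_atTop)

@[simp]
theorem oddLimitQuot_mk (f : ellInfty) :
    oddLimitQuot (Submodule.Quotient.mk f) = oddLimit f :=
  rfl

theorem oddLimitQuot_evenIndicator : oddLimitQuot (czero.mkQ evenIndicator) = 0 :=
  ultrafilterLim_indicator_of_notMem _ even_notMem_oddUltrafilter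

def evenTransvection : ellInftyModCzero ≃L[ℝ] ellInftyModCzero :=
  ContinuousLinearEquiv.transvection oddLimitQuot_evenIndicator

def evenTransvectionLift : ellInfty →L[ℝ] ellInfty :=
  ContinuousLinearMap.id ℝ ellInfty + oddLimit.smulRight evenIndicator

theorem mkQ_evenTransvectionLift (f : ellInfty) :
    czero.mkQ (evenTransvectionLift f) = evenTransvection (czero.mkQ f) := by
  simp [evenTransvectionLift, evenTransvection, ContinuousLinearEquiv.transvection_apply]

theorem tendsto_sub_of_mkQ_eq_evenTransvection {R : ellInfty →L[ℝ] ellInfty}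
    (hR : ∀ f : ellInfty, czero.mkQ (R f) = evenTransvection (czero.mkQ f)) (f : ellInfty) :
    Tendsto (fun n => R f n - f n - oddLimit f * evenIndicator n) atTop (𝓝 0) := by
  have h : R f - evenTransvectionLift f ∈ czero :=
    (Submodule.Quotient.eq czero).1 ((hR f).trans (mkQ_evenTransvectionLift f).symm)
  exact (show Tendsto (R f - evenTransvectionLift f) atTop (𝓝 0) from h).congr fun n =>
    (sub_sub _ _ _).symm

/-- There is a continuous linear automorphism `T` of `ℓ∞/c₀` which is liftable to a bounded
operator on `ℓ∞`, but none of whose liftings is given by a `c₀`-matrix. -/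
theorem statement14 :
    ∃ T : ellInftyModCzero ≃L[ℝ] ellInftyModCzero,
      (∃ R : ellInfty →L[ℝ] ellInfty,
        ∀ f : ellInfty, czero.mkQ (R f) = T (czero.mkQ f)) ∧
      (∀ R : ellInfty →L[ℝ] ellInfty,
        (∀ f : ellInfty, czero.mkQ (R f) = T (czero.mkQ f)) →
        ¬ ∃ b : ℕ → ℕ → ℝ, IsC0Matrix R b) := by
  refine ⟨evenTransvection, ⟨evenTransvectionLift, mkQ_evenTransvectionLift⟩, ?_⟩
  rintro R hR ⟨b, hb⟩
  obtain ⟨m, idx, hm, hidx⟩ := hb.exists_blocks Nat.frequently_even one_half_pos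
  obtain ⟨s, hsu, hs⟩ :=
    oddUltrafilter.exists_mem_frequently_disjoint hm.monotone.pairwise_disjoint_on_Ico_succ
  set f : ellInfty := indicator s (isClopen_discrete s)
  have hidx_top : Tendsto idx atTop atTop :=
    tendsto_atTop_mono (fun k => hm.le_apply.trans (hidx k).1.1) tendsto_id
  have hclose := ((tendsto_sub_of_mkQ_eq_evenTransvection hR f).comp hidx_top).eventually
    (Metric.ball_mem_nhds 0 one_half_pos)
  obtain ⟨k, hdisj, hk⟩ := (hs.and_eventually hclose).exists
  obtain ⟨hmem, heven, hsmall⟩ := hidx k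
  have hf0 : ∀ j ∈ Ico (m k) (m (k + 1)), f j = 0 := fun j hj => by
    simp [f, Set.indicator_of_notMem (hdisj.notMem_of_mem_right hj)]
  have hRf := hsmall f (fun j => by by_cases hj : j ∈ s <;> simp [f, hj]) hf0
  have hf1 : oddLimit f = 1 := ultrafilterLim_indicator_of_mem _ hsu
  have hek : evenIndicator (idx k) = 1 := by simp [evenIndicator, heven]
  have hk' : |R f (idx k) - f (idx k) - oddLimit f * evenIndicator (idx k)| < 1 / 2 := by
    rwa [Real.dist_eq, sub_zero] at hk
  rw [hf0 _ hmem, hf1, hek] at hk'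
  rw [abs_lt] at hk' hRf
  linarith
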